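/- For every multi-index α ∈ ℕ³ and every t ∈ (0, t₀], the weighted energy E_α(t) := (1/2) ∫_{[0,1]³} [ t^{4/γ} (∂_t∂_x^α ψ)²(t,x) + t^{8/(3γ)} Σ_{i=1}^{3} (∂_{x_i}∂_x^α ψ)²(t,x) ] dx satisfies E_α(t) ≤ E_α(t₀). -/

import Mathlib

noncomputable section

open MeasureTheory Filter Set

/-- Spatial partial derivative `∂_{x_i}` in the `i`-th coordinate direction. -/
def pd (i : Fin 3) (f : (Fin 3 → ℝ) → ℝ) (x : Fin 3 → ℝ) : ℝ :=
  deriv (fun s => f (Function.update x i s)) (x i)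

/-- Iterated spatial derivative `∂_x^α` for a multi-index `α ∈ ℕ³`. -/
def pdMulti (α : Fin 3 → ℕ) (f : (Fin 3 → ℝ) → ℝ) : (Fin 3 → ℝ) → ℝ :=
  (pd 0)^[α 0] ((pd 1)^[α 1] ((pd 2)^[α 2] f))

/-- Time derivative `∂_t`. -/
def dtd (ψ : ℝ → (Fin 3 → ℝ) → ℝ) : ℝ → (Fin 3 → ℝ) → ℝ :=
  fun t x => deriv (fun s => ψ s x) t

/-- `ℤ³`-periodicity of a function on `ℝ³`. -/
def ZPeriodic (f : (Fin 3 → ℝ) → ℝ) : Prop :=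
  ∀ (x : Fin 3 → ℝ) (k : Fin 3 → ℤ), f (x + fun i => (k i : ℝ)) = f x

/-- Smoothness of `ψ` on `(0,∞) × ℝ³`. -/
def SmoothOnPos (ψ : ℝ → (Fin 3 → ℝ) → ℝ) : Prop :=
  ContDiffOn ℝ (⊤ : ℕ∞) (fun p : ℝ × (Fin 3 → ℝ) => ψ p.1 p.2)
    {p : ℝ × (Fin 3 → ℝ) | 0 < p.1}

/-- The unit cube `[0,1]³`, a fundamental domain for `𝕋³`. -/
def cube : Set (Fin 3 → ℝ) := Set.Icc 0 1

/-- The FLRW wave equation `□_g ψ = 0` in coordinates. -/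
def FLRWwave (γ : ℝ) (ψ : ℝ → (Fin 3 → ℝ) → ℝ) : Prop :=
  ∀ t : ℝ, 0 < t → ∀ x : Fin 3 → ℝ,
    dtd (dtd ψ) t x + (2 / γ) * t⁻¹ * dtd ψ t x
      - t ^ (-(4 / (3 * γ))) * ∑ i : Fin 3, pd i (pd i (ψ t)) x = 0

/-- The weighted energy `E_α(t)` of a solution on FLRW. -/
def Eflrw (γ : ℝ) (ψ : ℝ → (Fin 3 → ℝ) → ℝ) (α : Fin 3 → ℕ) (t : ℝ) : ℝ :=
  (1 / 2) * ∫ x in cube,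
    (t ^ (4 / γ) * (dtd (fun s => pdMulti α (ψ s)) t x) ^ 2
      + t ^ (8 / (3 * γ)) * ∑ i : Fin 3, (pd i (pdMulti α (ψ t)) x) ^ 2)

/-!
Energy method. Put `G (t, x) = ψ t x` on `ℝ × ℝ³`. The coefficients of the wave equation depend
on `t` only, so every spatial derivative `∂_x^α G` is again a periodic solution and it suffices to
treat `α = 0`. Along a solution, the time derivative of the energy density
`t^{4/γ} (∂ₜG)² + t^{8/(3γ)} |∇G|²` equals
`8/(3γ) t^{8/(3γ)-1} |∇G|² + 2 t^{8/(3γ)} div (∂ₜG ∇G)`: the damping term `(2/γ) t⁻¹ ∂ₜG` cancels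
the growth of the weight `t^{4/γ}`, and `t^{4/γ} t^{-4/(3γ)} = t^{8/(3γ)}` makes the remaining
terms a divergence. By periodicity the divergence integrates to zero over the unit cube, so for
`γ ≥ 0` the energy is nondecreasing in `t`.
-/

open scoped ContDiff Topology

section DirDeriv

variable {E : Type*} [NormedAddCommGroup E] [NormedSpace ℝ E] {U : Set E} {F G : E → ℝ} {p : E}

/-- Defined through `fderiv` rather than `lineDeriv`, so that smoothness and the symmetry of
second derivatives come directly from the `fderiv` API. -/
def dirDeriv (w : E) (F : E → ℝ) : E → ℝ := fun p => fderiv ℝ F p w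

theorem ContDiffOn.dirDeriv (hU : IsOpen U) (hF : ContDiffOn ℝ ∞ F U) (w : E) :
    ContDiffOn ℝ ∞ (dirDeriv w F) U :=
  (hF.fderiv_of_isOpen hU (by simp)).clm_apply contDiffOn_const

theorem dirDeriv_congr_of_eqOn (hU : IsOpen U) (h : EqOn F G U) (hp : p ∈ U) (w : E) :
    dirDeriv w F p = dirDeriv w G p := by
  rw [dirDeriv, dirDeriv, (Filter.eventuallyEq_of_mem (hU.mem_nhds hp) h).fderiv_eq]

theorem contDiffOn_iterate_dirDeriv (hU : IsOpen U) (hF : ContDiffOn ℝ ∞ F U) (w : E) (n : ℕ) :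
    ContDiffOn ℝ ∞ ((dirDeriv w)^[n] F) U :=
  Function.Iterate.rec _ hF (fun _ h => h.dirDeriv hU w) n

theorem minSmoothness_two_le_infty : minSmoothness ℝ 2 ≤ ∞ := by
  rw [minSmoothness_of_isRCLikeNormedField]
  exact WithTop.coe_le_coe.2 le_top

theorem dirDeriv_comm (hU : IsOpen U) (hF : ContDiffOn ℝ ∞ F U) (hp : p ∈ U) (v w : E) :
    dirDeriv v (dirDeriv w F) p = dirDeriv w (dirDeriv v F) p := by
  have hFp : ContDiffAt ℝ ∞ F p := hF.contDiffAt (hU.mem_nhds hp)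
  have hF' : DifferentiableAt ℝ (fderiv ℝ F) p :=
    (hFp.fderiv_right (m := ∞) (by simp)).differentiableAt (by simp)
  have hsecond : ∀ u u' : E, dirDeriv u (dirDeriv u' F) p = fderiv ℝ (fderiv ℝ F) p u u' :=
    fun u u' => by
      change fderiv ℝ (fun q => fderiv ℝ F q u') p u = _
      simp [fderiv_clm_apply hF' (differentiableAt_const u')]
  rw [hsecond, hsecond, (hFp.isSymmSndFDerivAt minSmoothness_two_le_infty).eq]

theorem dirDeriv_comm_dirDeriv_dirDeriv (hU : IsOpen U) (hF : ContDiffOn ℝ ∞ F U) (hp : p ∈ U)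
    (v w : E) :
    dirDeriv v (dirDeriv w (dirDeriv w F)) p = dirDeriv w (dirDeriv w (dirDeriv v F)) p := by
  rw [dirDeriv_comm hU (hF.dirDeriv hU w) hp v w]
  exact dirDeriv_congr_of_eqOn hU (fun q hq => dirDeriv_comm hU hF hq v w) hp w

theorem dirDeriv_mul (hF : DifferentiableAt ℝ F p) (hG : DifferentiableAt ℝ G p) (w : E) :
    dirDeriv w (F * G) p = F p * dirDeriv w G p + G p * dirDeriv w F p := by
  change fderiv ℝ (F * G) p w = _
  rw [fderiv_mul hF hG]
  rfl

theorem DifferentiableAt.hasDerivAt_dirDeriv (hF : DifferentiableAt ℝ F p) (w : E) :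
    HasDerivAt (fun r : ℝ => F (p + r • w)) (dirDeriv w F p) 0 :=
  hF.hasFDerivAt.hasLineDerivAt w

end DirDeriv

theorem setIntegral_le_of_hasDerivAt_of_setIntegral_nonneg {X : Type*} [TopologicalSpace X]
    [T2Space X] [SecondCountableTopology X] [MeasurableSpace X] [BorelSpace X] {μ : Measure X}
    [IsFiniteMeasureOnCompacts μ] [SFinite μ] {K : Set X} (hK : IsCompact K) {e g : ℝ × X → ℝ}
    {a b : ℝ} (hab : a ≤ b) (he : ContinuousOn e (Icc a b ×ˢ K))
    (hg : ContinuousOn g (Icc a b ×ˢ K))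
    (hderiv : ∀ s ∈ Icc a b, ∀ x ∈ K, HasDerivAt (fun s => e (s, x)) (g (s, x)) s)
    (hnonneg : ∀ s ∈ Icc a b, 0 ≤ ∫ x in K, g (s, x) ∂μ) :
    ∫ x in K, e (a, x) ∂μ ≤ ∫ x in K, e (b, x) ∂μ := by
  have hslice : ∀ s ∈ Icc a b, IntegrableOn (fun x => e (s, x)) K μ := fun s hs =>
    (he.comp (Continuous.continuousOn (by fun_prop)) fun x hx => ⟨hs, hx⟩).integrableOn_compact hK
  have hFTC : ∀ x ∈ K, ∫ s in a..b, g (s, x) = e (b, x) - e (a, x) := fun x hx =>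
    intervalIntegral.integral_eq_sub_of_hasDerivAt
      (fun s hs => hderiv s (uIcc_of_le hab ▸ hs) x hx)
      (ContinuousOn.intervalIntegrable (hg.comp (Continuous.continuousOn (by fun_prop))
        fun s hs => ⟨uIcc_of_le hab ▸ hs, hx⟩))
  have hprod : Integrable (Function.uncurry fun x s => g (s, x))
      ((μ.restrict K).prod (volume.restrict (Ioc a b))) := by
    rw [Measure.prod_restrict]
    refine IntegrableOn.mono_set ?_ (prod_mono subset_rfl Ioc_subset_Icc_self)
    exact (hg.comp (Continuous.continuousOn (by fun_prop)) fun p hp => ⟨hp.2, hp.1⟩)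
      |>.integrableOn_compact (hK.prod isCompact_Icc)
  rw [← sub_nonneg, ← integral_sub (hslice b ⟨hab, le_rfl⟩) (hslice a ⟨le_rfl, hab⟩)]
  calc 0 ≤ ∫ s in Ioc a b, (∫ x in K, g (s, x) ∂μ) :=
        setIntegral_nonneg measurableSet_Ioc fun s hs => hnonneg s (Ioc_subset_Icc_self hs)
    _ = ∫ x in K, (∫ s in Ioc a b, g (s, x)) ∂μ := (integral_integral_swap hprod).symm
    _ = ∫ x in K, (e (b, x) - e (a, x)) ∂μ := by
        refine setIntegral_congr_fun hK.measurableSet fun x hx => ?_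
        rw [← hFTC x hx, intervalIntegral.integral_of_le hab]

theorem HasFDerivAt.hasDerivAt_comp_update {ι F : Type*} [Fintype ι] [DecidableEq ι]
    [NormedAddCommGroup F] [NormedSpace ℝ F] {g : (ι → ℝ) → F} {g' : (ι → ℝ) →L[ℝ] F}
    {x : ι → ℝ} (hg : HasFDerivAt g g' x) (i : ι) :
    HasDerivAt (fun s => g (Function.update x i s)) (g' (Pi.single i 1)) (x i) := by
  rw [← Function.update_eq_self i x] at hg
  exact hg.comp_hasDerivAt (x i) (hasDerivAt_update x i (x i))

theorem pd_eq_fderiv {g : (Fin 3 → ℝ) → ℝ} {x : Fin 3 → ℝ} (hg : DifferentiableAt ℝ g x)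
    (i : Fin 3) : pd i g x = fderiv ℝ g x (Pi.single i 1) :=
  (hg.hasFDerivAt.hasDerivAt_comp_update i).deriv

theorem ZPeriodic.apply_insertNth_one {f : (Fin 3 → ℝ) → ℝ} (hf : ZPeriodic f) (i : Fin 3)
    (y : Fin 2 → ℝ) : f (i.insertNth 1 y) = f (i.insertNth 0 y) := by
  have hshift : i.insertNth (1 : ℝ) y
      = i.insertNth (0 : ℝ) y + fun j => ((Pi.single i 1 : Fin 3 → ℤ) j : ℝ) := by
    funext j
    refine Fin.succAboveCases i ?_ (fun m => ?_) j
    · simp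
    · simp [Fin.insertNth_apply_succAbove]
  rw [hshift, hf]

theorem integral_cube_sum_pd_eq_zero {f : Fin 3 → (Fin 3 → ℝ) → ℝ}
    (hf : ∀ i, ContDiff ℝ 1 (f i)) (hper : ∀ i, ZPeriodic (f i)) :
    ∫ x in cube, ∑ i, pd i (f i) x = 0 := by
  have hpd : ∀ x, ∑ i, pd i (f i) x = ∑ i, fderiv ℝ (f i) x (Pi.single i 1) := fun x =>
    Finset.sum_congr rfl fun i _ => pd_eq_fderiv ((hf i).differentiable one_ne_zero x) i
  have hcont : Continuous fun x => ∑ i, fderiv ℝ (f i) x (Pi.single i 1) :=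
    continuous_finsetSum _ fun i _ =>
      ((hf i).continuous_fderiv one_ne_zero).clm_apply continuous_const
  simp only [hpd]
  rw [cube, integral_divergence_of_hasFDerivAt_off_countable' 0 1 (zero_le_one' (Fin 3 → ℝ)) f
      (fun i x => fderiv ℝ (f i) x) ∅ countable_empty (fun i => (hf i).continuous.continuousOn)
      (fun x _ i => ((hf i).differentiable one_ne_zero x).hasFDerivAt)
      (hcont.continuousOn.integrableOn_compact isCompact_Icc)]
  exact Finset.sum_eq_zero fun i _ => by simp [(hper i).apply_insertNth_one i]

abbrev Spacetime := ℝ × (Fin 3 → ℝ)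

def posTime : Set Spacetime := {p | 0 < p.1}

theorem isOpen_posTime : IsOpen posTime := isOpen_lt continuous_const continuous_fst

def timeDir : Spacetime := (1, 0)

def spaceDir (i : Fin 3) : Spacetime := (0, Pi.single i 1)

local notation "∂ₜ" => dirDeriv timeDir
local notation "∂[" i "]" => dirDeriv (spaceDir i)

theorem ContDiffOn.differentiableAt_of_mem_posTime {n : WithTop ℕ∞} {G : Spacetime → ℝ}
    (hG : ContDiffOn ℝ n G posTime) (hn : n ≠ 0) {p : Spacetime} (hp : p ∈ posTime) :
    DifferentiableAt ℝ G p :=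
  (hG.differentiableOn hn).differentiableAt (isOpen_posTime.mem_nhds hp)

theorem hasDerivAt_timeSlice {G : Spacetime → ℝ} {t : ℝ} {x : Fin 3 → ℝ}
    (hG : DifferentiableAt ℝ G (t, x)) : HasDerivAt (fun s => G (s, x)) (∂ₜ G (t, x)) t :=
  hG.hasFDerivAt.comp_hasDerivAt t ((hasDerivAt_id t).prodMk (hasDerivAt_const t x))

theorem pd_spaceSlice {G : Spacetime → ℝ} {t : ℝ} {x : Fin 3 → ℝ}
    (hG : DifferentiableAt ℝ G (t, x)) (i : Fin 3) :
    pd i (fun y => G (t, y)) x = ∂[i] G (t, x) :=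
  ((hG.hasFDerivAt.comp x (hasFDerivAt_prodMk_right t x)).hasDerivAt_comp_update i).deriv

def SpatiallyPeriodic (G : Spacetime → ℝ) : Prop :=
  ∀ t, 0 < t → ZPeriodic fun x => G (t, x)

theorem SpatiallyPeriodic.dirDeriv {G : Spacetime → ℝ} (hG : SpatiallyPeriodic G) (w : Spacetime) :
    SpatiallyPeriodic (dirDeriv w G) := by
  intro t ht x k
  set c : Spacetime := (0, fun i => (k i : ℝ))
  have hc : ∀ q : Spacetime, (q.1, q.2 + fun i => (k i : ℝ)) = q + c := fun q =>
    Prod.ext (add_zero q.1).symm rfl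
  have hshift : (fun q => G (q + c)) =ᶠ[𝓝 (t, x)] G := by
    filter_upwards [isOpen_posTime.mem_nhds ht] with q hq
    rw [← hc]
    exact hG q.1 hq q.2 k
  change fderiv ℝ G (t, x + fun i => (k i : ℝ)) w = fderiv ℝ G (t, x) w
  rw [hc (t, x), ← fderiv_comp_add_right, hshift.fderiv_eq]

def waveOp (γ : ℝ) (G : Spacetime → ℝ) (p : Spacetime) : ℝ :=
  ∂ₜ (∂ₜ G) p + 2 / γ * p.1⁻¹ * ∂ₜ G p - p.1 ^ (-(4 / (3 * γ))) * ∑ i, ∂[i] (∂[i] G) p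

theorem waveOp_spaceDeriv_eq_zero {γ : ℝ} {G : Spacetime → ℝ} (hG : ContDiffOn ℝ ∞ G posTime)
    (hW : ∀ p ∈ posTime, waveOp γ G p = 0) (j : Fin 3) {p : Spacetime} (hp : p ∈ posTime) :
    waveOp γ (∂[j] G) p = 0 := by
  have hline : ∀ r : ℝ, (p + r • spaceDir j).1 = p.1 := fun r => by simp [spaceDir]
  have hderiv : ∀ H, ContDiffOn ℝ ∞ H posTime →
      HasDerivAt (fun r : ℝ => H (p + r • spaceDir j)) (∂[j] H p) 0 := fun H hH =>
    (hH.differentiableAt_of_mem_posTime (by simp) hp).hasDerivAt_dirDeriv _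
  have hsecond : ∀ w, ContDiffOn ℝ ∞ (dirDeriv w (dirDeriv w G)) posTime := fun w =>
    (hG.dirDeriv isOpen_posTime w).dirDeriv isOpen_posTime w
  have hwave : HasDerivAt (fun r : ℝ => waveOp γ G (p + r • spaceDir j))
      (waveOp γ (∂[j] G) p) 0 := by
    have := ((hderiv _ (hsecond timeDir)).fun_add
      ((hderiv _ (hG.dirDeriv isOpen_posTime timeDir)).const_mul (2 / γ * p.1⁻¹))).fun_sub
      ((HasDerivAt.fun_sum (u := Finset.univ) fun i _ => hderiv _ (hsecond (spaceDir i))).const_mul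
        (p.1 ^ (-(4 / (3 * γ)))))
    refine (this.congr_of_eventuallyEq (Filter.Eventually.of_forall fun r => ?_)).congr_deriv ?_
    · simp only [waveOp, hline]
    · simp only [waveOp, dirDeriv_comm_dirDeriv_dirDeriv isOpen_posTime hG hp (spaceDir j),
        dirDeriv_comm isOpen_posTime hG hp (spaceDir j) timeDir]
  have hzero : (fun r : ℝ => waveOp γ G (p + r • spaceDir j)) = fun _ => 0 :=
    funext fun r => hW _ (show 0 < (p + r • spaceDir j).1 from (hline r).symm ▸ hp)
  rw [hzero] at hwave
  exact hwave.unique (hasDerivAt_const 0 0)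

structure IsPeriodicFLRWSolution (γ : ℝ) (G : Spacetime → ℝ) : Prop where
  contDiffOn : ContDiffOn ℝ ∞ G posTime
  periodic : SpatiallyPeriodic G
  waveOp_eq_zero : ∀ p ∈ posTime, waveOp γ G p = 0

theorem IsPeriodicFLRWSolution.spaceDeriv {γ : ℝ} {G : Spacetime → ℝ}
    (h : IsPeriodicFLRWSolution γ G) (i : Fin 3) : IsPeriodicFLRWSolution γ (∂[i] G) :=
  ⟨h.contDiffOn.dirDeriv isOpen_posTime _, h.periodic.dirDeriv _,
    fun _ => waveOp_spaceDeriv_eq_zero h.contDiffOn h.waveOp_eq_zero i⟩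

theorem integral_cube_sum_spaceDeriv_eq_zero {Φ : Fin 3 → Spacetime → ℝ}
    (hΦ : ∀ i, ContDiffOn ℝ 1 (Φ i) posTime) (hper : ∀ i, SpatiallyPeriodic (Φ i)) {s : ℝ}
    (hs : 0 < s) : ∫ x in cube, ∑ i, ∂[i] (Φ i) (s, x) = 0 := by
  have hslice : ∀ i, ContDiff ℝ 1 fun y => Φ i (s, y) := fun i =>
    (hΦ i).comp_contDiff (contDiff_const.prodMk contDiff_id) fun _ => hs
  rw [← integral_cube_sum_pd_eq_zero hslice fun i => hper i s hs]
  congr with x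
  exact Finset.sum_congr rfl fun i _ =>
    (pd_spaceSlice ((hΦ i).differentiableAt_of_mem_posTime one_ne_zero hs) i).symm

def energyDensity (γ : ℝ) (G : Spacetime → ℝ) (p : Spacetime) : ℝ :=
  p.1 ^ (4 / γ) * ∂ₜ G p ^ 2 + p.1 ^ (8 / (3 * γ)) * ∑ i, ∂[i] G p ^ 2

def energyRate (γ : ℝ) (G : Spacetime → ℝ) (p : Spacetime) : ℝ :=
  8 / (3 * γ) * p.1 ^ (8 / (3 * γ) - 1) * ∑ i, ∂[i] G p ^ 2
    + 2 * p.1 ^ (8 / (3 * γ)) * ∑ i, ∂[i] (∂ₜ G * ∂[i] G) p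

theorem continuousOn_rpow_fst (c : ℝ) : ContinuousOn (fun p : Spacetime => p.1 ^ c) posTime :=
  continuousOn_fst.rpow_const fun _ hp => Or.inl (ne_of_gt hp)

theorem continuousOn_energyDensity {γ : ℝ} {G : Spacetime → ℝ} (hG : ContDiffOn ℝ ∞ G posTime) :
    ContinuousOn (energyDensity γ G) posTime := by
  have hD : ∀ w, ContinuousOn (dirDeriv w G) posTime := fun w =>
    (hG.dirDeriv isOpen_posTime w).continuousOn
  exact ((continuousOn_rpow_fst _).mul ((hD _).pow 2)).add
    ((continuousOn_rpow_fst _).mul (continuousOn_finsetSum _ fun i _ => (hD _).pow 2))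

theorem continuousOn_energyRate {γ : ℝ} {G : Spacetime → ℝ} (hG : ContDiffOn ℝ ∞ G posTime) :
    ContinuousOn (energyRate γ G) posTime := by
  have hD : ∀ w, ContDiffOn ℝ ∞ (dirDeriv w G) posTime := fun w => hG.dirDeriv isOpen_posTime w
  have hflux : ∀ i, ContinuousOn (∂[i] (∂ₜ G * ∂[i] G)) posTime := fun i =>
    (((hD _).mul (hD _)).dirDeriv isOpen_posTime _).continuousOn
  exact ((continuousOn_const.mul (continuousOn_rpow_fst _)).mul
      (continuousOn_finsetSum _ fun i _ => (hD _).continuousOn.pow 2)).add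
    ((continuousOn_const.mul (continuousOn_rpow_fst _)).mul
      (continuousOn_finsetSum _ fun i _ => hflux i))

theorem hasDerivAt_energyDensity {γ : ℝ} {G : Spacetime → ℝ} (hG : ContDiffOn ℝ ∞ G posTime)
    (hW : ∀ p ∈ posTime, waveOp γ G p = 0) {s : ℝ} (hs : 0 < s) (x : Fin 3 → ℝ) :
    HasDerivAt (fun s => energyDensity γ G (s, x)) (energyRate γ G (s, x)) s := by
  have hp : (s, x) ∈ posTime := hs
  have hD : ∀ w, ContDiffOn ℝ ∞ (dirDeriv w G) posTime := fun w => hG.dirDeriv isOpen_posTime w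
  have hDdiff : ∀ w, DifferentiableAt ℝ (dirDeriv w G) (s, x) := fun w =>
    (hD w).differentiableAt_of_mem_posTime (by simp) hp
  have hderiv := ((Real.hasDerivAt_rpow_const (p := 4 / γ) (Or.inl hs.ne')).mul
      ((hasDerivAt_timeSlice (hDdiff timeDir)).pow 2)).add
    ((Real.hasDerivAt_rpow_const (p := 8 / (3 * γ)) (Or.inl hs.ne')).mul
      (HasDerivAt.fun_sum (u := Finset.univ) fun i _ =>
        (hasDerivAt_timeSlice (hDdiff (spaceDir i))).pow 2))
  refine hderiv.congr_deriv ?_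
  have hwave := hW _ hp
  have hflux : ∀ i, ∂[i] (∂ₜ G * ∂[i] G) (s, x)
      = ∂ₜ G (s, x) * ∂[i] (∂[i] G) (s, x) + ∂[i] G (s, x) * ∂[i] (∂ₜ G) (s, x) := fun i =>
    dirDeriv_mul (hDdiff _) (hDdiff _) _
  have hsymm : ∀ i, ∂ₜ (∂[i] G) (s, x) = ∂[i] (∂ₜ G) (s, x) := fun i =>
    dirDeriv_comm isOpen_posTime hG hp _ _
  have hpow : s ^ (4 / γ - 1) = s ^ (4 / γ) * s⁻¹ := by
    rw [Real.rpow_sub hs, Real.rpow_one, div_eq_mul_inv]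
  have hpow' : s ^ (4 / γ) * s ^ (-(4 / (3 * γ))) = s ^ (8 / (3 * γ)) := by
    rw [← Real.rpow_add hs]
    ring_nf
  simp only [energyRate, waveOp, hflux, hsymm, hpow, Pi.pow_apply, Fin.sum_univ_three] at hwave ⊢
  linear_combination (2 * s ^ (4 / γ) * ∂ₜ G (s, x)) * hwave
    + 2 * ∂ₜ G (s, x) * (∂[0] (∂[0] G) (s, x) + ∂[1] (∂[1] G) (s, x) + ∂[2] (∂[2] G) (s, x))
      * hpow'

theorem integrableOn_cube_of_continuousOn {H : Spacetime → ℝ} (hH : ContinuousOn H posTime)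
    {s : ℝ} (hs : 0 < s) : IntegrableOn (fun x => H (s, x)) cube :=
  (hH.comp (Continuous.continuousOn (by fun_prop)) fun _ _ => hs).integrableOn_compact
    isCompact_Icc

theorem integral_energyRate_nonneg {γ : ℝ} (hγ : 0 ≤ γ) {G : Spacetime → ℝ}
    (hG : ContDiffOn ℝ ∞ G posTime) (hP : SpatiallyPeriodic G) {s : ℝ} (hs : 0 < s) :
    0 ≤ ∫ x in cube, energyRate γ G (s, x) := by
  have hD : ∀ w, ContDiffOn ℝ ∞ (dirDeriv w G) posTime := fun w => hG.dirDeriv isOpen_posTime w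
  have hflux : ∀ i, ContDiffOn ℝ ∞ (∂ₜ G * ∂[i] G) posTime := fun i => (hD _).mul (hD _)
  have hfluxPer : ∀ i, SpatiallyPeriodic (∂ₜ G * ∂[i] G) := fun i t ht x k => by
    simp only [Pi.mul_apply, hP.dirDeriv _ t ht x k]
  have hint₁ := integrableOn_cube_of_continuousOn
    (H := fun p => 8 / (3 * γ) * p.1 ^ (8 / (3 * γ) - 1) * ∑ i, ∂[i] G p ^ 2)
    ((continuousOn_const.mul (continuousOn_rpow_fst _)).mul
      (continuousOn_finsetSum _ fun i _ => (hD _).continuousOn.pow 2)) hs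
  have hint₂ := integrableOn_cube_of_continuousOn
    (H := fun p => 2 * p.1 ^ (8 / (3 * γ)) * ∑ i, ∂[i] (∂ₜ G * ∂[i] G) p)
    ((continuousOn_const.mul (continuousOn_rpow_fst _)).mul
      (continuousOn_finsetSum _ fun i _ => ((hflux i).dirDeriv isOpen_posTime _).continuousOn)) hs
  simp only [energyRate]
  rw [integral_add hint₁ hint₂, integral_const_mul (2 * s ^ (8 / (3 * γ))),
    integral_cube_sum_spaceDeriv_eq_zero (fun i => (hflux i).of_le (by simp)) hfluxPer hs,
    mul_zero, add_zero]
  exact setIntegral_nonneg measurableSet_Icc fun x _ =>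
    mul_nonneg (mul_nonneg (by positivity) (Real.rpow_nonneg hs.le _))
      (Finset.sum_nonneg fun i _ => sq_nonneg _)

theorem IsPeriodicFLRWSolution.integral_energyDensity_le {γ : ℝ} (hγ : 0 ≤ γ)
    {G : Spacetime → ℝ} (h : IsPeriodicFLRWSolution γ G) {t t₀ : ℝ} (ht : 0 < t) (htt : t ≤ t₀) :
    ∫ x in cube, energyDensity γ G (t, x) ≤ ∫ x in cube, energyDensity γ G (t₀, x) := by
  have hsub : Icc t t₀ ×ˢ cube ⊆ posTime := fun p hp => ht.trans_le hp.1.1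
  exact setIntegral_le_of_hasDerivAt_of_setIntegral_nonneg isCompact_Icc htt
    ((continuousOn_energyDensity h.contDiffOn).mono hsub)
    ((continuousOn_energyRate h.contDiffOn).mono hsub)
    (fun s hs x _ => hasDerivAt_energyDensity h.contDiffOn h.waveOp_eq_zero (ht.trans_le hs.1) x)
    (fun s hs => integral_energyRate_nonneg hγ h.contDiffOn h.periodic (ht.trans_le hs.1))

def spaceIter (α : Fin 3 → ℕ) (G : Spacetime → ℝ) : Spacetime → ℝ :=
  (∂[0])^[α 0] ((∂[1])^[α 1] ((∂[2])^[α 2] G))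

theorem spaceIter_induction {P : (Spacetime → ℝ) → Prop} (hP : ∀ i G, P G → P (∂[i] G))
    (α : Fin 3 → ℕ) {G : Spacetime → ℝ} (hG : P G) : P (spaceIter α G) :=
  Function.Iterate.rec P (Function.Iterate.rec P (Function.Iterate.rec P hG (hP 2) _) (hP 1) _)
    (hP 0) _

theorem IsPeriodicFLRWSolution.spaceIter {γ : ℝ} {G : Spacetime → ℝ}
    (h : IsPeriodicFLRWSolution γ G) (α : Fin 3 → ℕ) :
    IsPeriodicFLRWSolution γ (spaceIter α G) :=
  spaceIter_induction (fun i _ hG => hG.spaceDeriv i) α h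

theorem iterate_pd_spaceSlice {G : Spacetime → ℝ} (hG : ContDiffOn ℝ ∞ G posTime) {t : ℝ}
    (ht : 0 < t) (i : Fin 3) (n : ℕ) :
    (pd i)^[n] (fun y => G (t, y)) = fun y => (∂[i])^[n] G (t, y) := by
  induction n generalizing G with
  | zero => rfl
  | succ n ih =>
    rw [Function.iterate_succ_apply, Function.iterate_succ_apply,
      ← ih (hG.dirDeriv isOpen_posTime _)]
    congr 1
    exact funext fun y => pd_spaceSlice (hG.differentiableAt_of_mem_posTime (by simp) ht) i

theorem pdMulti_spaceSlice {G : Spacetime → ℝ} (hG : ContDiffOn ℝ ∞ G posTime) {t : ℝ}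
    (ht : 0 < t) (α : Fin 3 → ℕ) :
    pdMulti α (fun y => G (t, y)) = fun y => spaceIter α G (t, y) := by
  rw [pdMulti, spaceIter, iterate_pd_spaceSlice hG ht,
    iterate_pd_spaceSlice (contDiffOn_iterate_dirDeriv isOpen_posTime hG _ _) ht,
    iterate_pd_spaceSlice (contDiffOn_iterate_dirDeriv isOpen_posTime
      (contDiffOn_iterate_dirDeriv isOpen_posTime hG _ _) _ _) ht]

theorem eqOn_uncurry_dtd {φ : ℝ → (Fin 3 → ℝ) → ℝ} {G : Spacetime → ℝ}
    (hG : ContDiffOn ℝ ∞ G posTime) (hφ : EqOn (Function.uncurry φ) G posTime) :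
    EqOn (Function.uncurry (dtd φ)) (∂ₜ G) posTime := by
  rintro ⟨t, x⟩ (ht : 0 < t)
  have hslice : (fun s => φ s x) =ᶠ[𝓝 t] fun s => G (s, x) := by
    filter_upwards [Ioi_mem_nhds ht] with s hs
    exact hφ (show ((s, x) : Spacetime) ∈ posTime from hs)
  exact hslice.deriv_eq.trans
    (hasDerivAt_timeSlice (hG.differentiableAt_of_mem_posTime (by simp) ht)).deriv

theorem isPeriodicFLRWSolution_uncurry {γ : ℝ} {ψ : ℝ → (Fin 3 → ℝ) → ℝ}
    (hsmooth : SmoothOnPos ψ) (hper : ∀ t : ℝ, 0 < t → ZPeriodic (ψ t)) (hwave : FLRWwave γ ψ) :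
    IsPeriodicFLRWSolution γ (Function.uncurry ψ) := by
  refine ⟨hsmooth, hper, ?_⟩
  rintro ⟨t, x⟩ (ht : 0 < t)
  have htx : ((t, x) : Spacetime) ∈ posTime := ht
  have hdt := eqOn_uncurry_dtd hsmooth fun _ _ => rfl
  have hdtt := eqOn_uncurry_dtd (hsmooth.dirDeriv isOpen_posTime _) hdt
  have hpd : ∀ i, pd i (ψ t) = fun y => ∂[i] (Function.uncurry ψ) (t, y) := fun i =>
    funext fun y => pd_spaceSlice (hsmooth.differentiableAt_of_mem_posTime (by simp) ht) i
  have hpdpd : ∀ i, pd i (pd i (ψ t)) x = ∂[i] (∂[i] (Function.uncurry ψ)) (t, x) := fun i => by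
    rw [hpd]
    exact pd_spaceSlice (((hsmooth.dirDeriv isOpen_posTime _).differentiableAt_of_mem_posTime
      (by simp) ht)) i
  have := hwave t ht x
  rwa [show dtd (dtd ψ) t x = _ from hdtt htx, show dtd ψ t x = _ from hdt htx,
    Finset.sum_congr rfl fun i _ => hpdpd i] at this

theorem Eflrw_eq_integral_energyDensity {γ : ℝ} {ψ : ℝ → (Fin 3 → ℝ) → ℝ}
    (hsmooth : SmoothOnPos ψ) (α : Fin 3 → ℕ) {t : ℝ} (ht : 0 < t) :
    Eflrw γ ψ α t
      = 1 / 2 * ∫ x in cube, energyDensity γ (spaceIter α (Function.uncurry ψ)) (t, x) := by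
  have hG : ContDiffOn ℝ ∞ (spaceIter α (Function.uncurry ψ)) posTime :=
    spaceIter_induction (P := fun H => ContDiffOn ℝ ∞ H posTime)
      (fun _ _ hH => hH.dirDeriv isOpen_posTime _) α hsmooth
  have hslice : ∀ s, 0 < s → pdMulti α (ψ s) = fun y => spaceIter α (Function.uncurry ψ) (s, y) :=
    fun s hs => pdMulti_spaceSlice hsmooth hs α
  have hdt := eqOn_uncurry_dtd (φ := fun s => pdMulti α (ψ s)) hG
    fun p (hp : 0 < p.1) => congrFun (hslice p.1 hp) p.2
  rw [Eflrw]
  congr 1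
  refine setIntegral_congr_fun measurableSet_Icc fun x _ => ?_
  have htx : ((t, x) : Spacetime) ∈ posTime := ht
  rw [energyDensity, show dtd (fun s => pdMulti α (ψ s)) t x = _ from hdt htx, hslice t ht]
  simp only [pd_spaceSlice (hG.differentiableAt_of_mem_posTime (by simp) ht)]

theorem flrw_energy_estimate_general
    (γ t₀ : ℝ) (hγ1 : 2 / 3 < γ)
    (ψ : ℝ → (Fin 3 → ℝ) → ℝ)
    (hsmooth : SmoothOnPos ψ)
    (hper : ∀ t : ℝ, 0 < t → ZPeriodic (ψ t))
    (hwave : FLRWwave γ ψ) :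
    ∀ α : Fin 3 → ℕ, ∀ t ∈ Set.Ioc (0 : ℝ) t₀, Eflrw γ ψ α t ≤ Eflrw γ ψ α t₀ := by
  rintro α t ⟨ht, htt⟩
  have hsol := (isPeriodicFLRWSolution_uncurry hsmooth hper hwave).spaceIter α
  rw [Eflrw_eq_integral_energyDensity hsmooth α ht,
    Eflrw_eq_integral_energyDensity hsmooth α (ht.trans_le htt)]
  exact mul_le_mul_of_nonneg_left (hsol.integral_energyDensity_le (by linarith) ht htt)
    (by norm_num)

/-- **Proposition 1, energy estimate (FLRW).** The weighted energies are monotone: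
`E_α(t) ≤ E_α(t₀)` for all `0 < t ≤ t₀` and every multi-index `α`. -/
theorem flrw_energy_estimate
    (γ t₀ : ℝ) (hγ1 : 2 / 3 < γ) (hγ2 : γ < 2) (ht₀ : 0 < t₀)
    (ψ : ℝ → (Fin 3 → ℝ) → ℝ)
    (hsmooth : SmoothOnPos ψ)
    (hper : ∀ t : ℝ, 0 < t → ZPeriodic (ψ t))
    (hwave : FLRWwave γ ψ) :
    ∀ α : Fin 3 → ℕ, ∀ t ∈ Set.Ioc (0 : ℝ) t₀, Eflrw γ ψ α t ≤ Eflrw γ ψ α t₀ :=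
  flrw_energy_estimate_general γ t₀ hγ1 ψ hsmooth hper hwave
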